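/- Let C be a perfect t-deletion binary code of length n with t < n. For any positive integers a, b, and c with c ≤ a < b ≤ n, Σ_{a ≤ r ≤ b+2t} #C_r ≥ (C(c+t−1, t)/C(c+b−a+3t−1, t)) · (2/C(n−1, t)) · Σ_{a ≤ p ≤ b} C(n−1, p+t−1). -/

import Mathlib

open Filter Finset

/-- The number of runs of a binary sequence (maximal blocks of equal consecutive symbols). -/
def runsCount (x : List Bool) : ℕ := (x.destutter (· ≠ ·)).length

/-- The deletion sphere `dS^t(x)`: all sequences obtained from `x` by deleting `t` symbols,
i.e. the sublists of `x` of length `x.length - t`. -/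
def delSphere (t : ℕ) (x : List Bool) : Set (List Bool) :=
  {y | y.Sublist x ∧ y.length = x.length - t}

/-- `dS^t(X)` for a set `X` of sequences. -/
def delSphereSet (t : ℕ) (X : Set (List Bool)) : Set (List Bool) :=
  ⋃ x ∈ X, delSphere t x

/-- A `t`-deletion code of length `n`: a set of binary sequences of length `n`
with pairwise disjoint deletion spheres. -/
def IsDeletionCode (t n : ℕ) (C : Set (List Bool)) : Prop :=
  (∀ c ∈ C, c.length = n) ∧
  ∀ c ∈ C, ∀ d ∈ C, c ≠ d → delSphere t c ∩ delSphere t d = ∅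

/-- A perfect `t`-deletion code of length `n`: the deletion spheres of codewords
cover all of `𝔹^{n-t}`. -/
def IsPerfectDeletionCode (t n : ℕ) (C : Set (List Bool)) : Prop :=
  IsDeletionCode t n C ∧ delSphereSet t C = {y : List Bool | y.length = n - t}

/-- `M^t(n)`: the maximum cardinality of a `t`-deletion code of length `n`. -/
noncomputable def maxDelCodeSize (t n : ℕ) : ℕ :=
  sSup {m : ℕ | ∃ C : Set (List Bool), IsDeletionCode t n C ∧ C.ncard = m}

/-!
Let `Y` be the set of sequences of length `n - t` with between `a` and `b` runs. Choosing the
first symbol and the positions of the `p - 1` run boundaries shows that `Y` has at least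
`2 ∑ₚ C(n-t-1, p-1)` elements. Deleting symbols never increases the number of runs and lowers it
by at most two per symbol, so by perfectness every `y ∈ Y` is a `t`-deletion of a codeword with
between `a` and `b + 2t` runs, and a sequence with `r` runs has at most `C(r+t-1, t)`
`t`-deletions (split off its first run and sum over the number of deleted symbols of that run,
by induction). Comparing the two counts and using `C(n-1, p+t-1) C(p+t-1, t) =
C(n-1, t) C(n-t-1, p-1)` together with the monotonicity of `C(x+d+t, t) / C(x+t, t)` in `x`
gives the bound.
-/

open scoped List

lemma List.sublist_replicate_append {α : Type*} {y x : List α} {a : α} {k : ℕ}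
    (h : y <+ replicate k a ++ x) : ∃ j ≤ k, ∃ z, z <+ x ∧ y = replicate j a ++ z := by
  induction k generalizing y with
  | zero => exact ⟨0, le_rfl, y, h, rfl⟩
  | succ k ih =>
    rcases sublist_cons_iff.1 h with hy | ⟨y', rfl, hy'⟩
    · obtain ⟨j, hj, z, hz, rfl⟩ := ih hy
      exact ⟨j, by omega, z, hz, rfl⟩
    · obtain ⟨j, hj, z, hz, rfl⟩ := ih hy'
      exact ⟨j + 1, by omega, z, hz, rfl⟩

section Runs

open List

lemma runsCount_cons (a : Bool) (l : List Bool) :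
    runsCount (a :: l) = runsCount l + if l.head? = some a then 0 else 1 := by
  cases l with
  | nil => rfl
  | cons b l =>
    by_cases h : b = a
    · subst h
      rw [runsCount, destutter_cons_cons, if_neg (not_not.2 rfl)]
      simp [runsCount, destutter_cons']
    · simp [runsCount, h, Ne.symm h, destutter_cons']

lemma runsCount_le_runsCount_cons (a : Bool) (l : List Bool) :
    runsCount l ≤ runsCount (a :: l) := by
  rw [runsCount_cons]
  exact Nat.le_add_right _ _

lemma runsCount_cons_le (a : Bool) (l : List Bool) :
    runsCount (a :: l) ≤ runsCount l + 1 := by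
  rw [runsCount_cons]
  split <;> omega

lemma runsCount_cons_cons (a b : Bool) (l : List Bool) :
    runsCount (a :: b :: l) = runsCount (b :: l) + if b = a then 0 else 1 := by
  simp [runsCount_cons a (b :: l)]

lemma runsCount_cons_le_cons_cons (a b : Bool) (l : List Bool) :
    runsCount (a :: l) ≤ runsCount (a :: b :: l) := by
  rw [runsCount_cons_cons]
  split_ifs with hba
  · rw [hba, add_zero]
  · linarith [runsCount_cons_le a l, runsCount_le_runsCount_cons b l]

lemma runsCount_cons_mono {y x : List Bool} (h : y <+ x) (a : Bool) :
    runsCount (a :: y) ≤ runsCount (a :: x) := by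
  induction h generalizing a with
  | slnil => rfl
  | cons b _ ih => exact (ih a).trans (runsCount_cons_le_cons_cons a b _)
  | cons_cons b _ ih =>
    rw [runsCount_cons_cons, runsCount_cons_cons]
    exact Nat.add_le_add_right (ih b) _

lemma runsCount_mono {y x : List Bool} (h : y <+ x) : runsCount y ≤ runsCount x := by
  induction h with
  | slnil => rfl
  | cons b _ ih => exact ih.trans (runsCount_le_runsCount_cons b _)
  | cons_cons b h _ => exact runsCount_cons_mono h b

lemma runsCount_cons_le_of_sublist {y x : List Bool} (h : y <+ x) (a : Bool) :
    runsCount (a :: x) ≤ runsCount (a :: y) + 2 * (x.length - y.length) := by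
  induction h generalizing a with
  | slnil => simp
  | @cons l₁ l₂ b h ih =>
    have := h.length_le
    have := ih b
    have := runsCount_cons_le a (b :: l₂)
    have := runsCount_cons_le b l₁
    have := runsCount_le_runsCount_cons a l₁
    simp only [length_cons]
    omega
  | @cons_cons l₁ l₂ b h ih =>
    have := h.length_le
    have := ih b
    rw [runsCount_cons_cons, runsCount_cons_cons]
    simp only [length_cons]
    omega

lemma runsCount_le_of_sublist {y x : List Bool} (h : y <+ x) :
    runsCount x ≤ runsCount y + 2 * (x.length - y.length) := by
  induction h with
  | slnil => simp
  | @cons l₁ l₂ b h ih =>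
    have := h.length_le
    have := runsCount_cons_le b l₂
    simp only [length_cons]
    omega
  | cons_cons b h _ => simpa using runsCount_cons_le_of_sublist h b

lemma exists_eq_replicate_append {x : List Bool} (hx : x ≠ []) :
    ∃ b k x', 0 < k ∧ x = replicate k b ++ x' ∧ runsCount x = runsCount x' + 1 := by
  induction x with
  | nil => contradiction
  | cons a s ih =>
    by_cases hs : s.head? = some a
    · obtain ⟨s, rfl⟩ : ∃ s', s = a :: s' := by
        cases s <;> simp_all
      obtain ⟨b, k, x', hk, hs', hr⟩ := ih (cons_ne_nil _ _)
      obtain rfl : b = a := by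
        obtain ⟨k, rfl⟩ := Nat.exists_eq_add_of_lt hk
        simpa [replicate_succ] using (congrArg head? hs').symm
      refine ⟨b, k + 1, x', k.succ_pos, by rw [hs']; rfl, ?_⟩
      rw [runsCount_cons, hr, if_pos hs]
    · exact ⟨a, 1, s, one_pos, rfl, by rw [runsCount_cons, if_neg hs]⟩

end Runs

section Deletions

variable {α : Type*} [DecidableEq α]

/-- The sequences obtained from `x` by deleting exactly `t` symbols; unlike `delSphere`, this is
empty when `t > x.length`. -/
def deletions (t : ℕ) (x : List α) : Finset (List α) :=
  {y ∈ x.sublists.toFinset | y.length + t = x.length}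

@[simp] lemma mem_deletions {t : ℕ} {x y : List α} :
    y ∈ deletions t x ↔ y <+ x ∧ y.length + t = x.length := by
  simp [deletions]

lemma deletions_replicate_append_subset (t k : ℕ) (a : α) (x : List α) :
    deletions t (List.replicate k a ++ x) ⊆ (range (t + 1)).biUnion fun d =>
      (deletions (t - d) x).image (List.replicate (k - d) a ++ ·) := by
  intro y hy
  obtain ⟨hyx, hlen⟩ := mem_deletions.1 hy
  obtain ⟨j, hjk, z, hzx, rfl⟩ := List.sublist_replicate_append hyx
  have := hzx.length_le
  simp only [List.length_append, List.length_replicate] at hlen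
  simp only [mem_biUnion, mem_range, mem_image, mem_deletions]
  exact ⟨k - j, by omega, z, ⟨hzx, by omega⟩, by rw [Nat.sub_sub_self hjk]⟩

end Deletions

lemma sum_range_add_sub_one_choose (r t : ℕ) :
    ∑ s ∈ range (t + 1), (r + s - 1).choose s = (r + t).choose t := by
  induction t with
  | zero => simp
  | succ t ih =>
    rw [sum_range_succ, ih, ← add_assoc, Nat.add_sub_cancel, Nat.choose_succ_succ']

theorem card_deletions_le (x : List Bool) (t : ℕ) :
    #(deletions t x) ≤ (runsCount x + t - 1).choose t := by
  rcases eq_or_ne x [] with rfl | hx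
  · cases t <;> simp [deletions, List.sublists, filter_singleton]
  obtain ⟨b, k, x', hk, rfl, hruns⟩ := exists_eq_replicate_append hx
  calc #(deletions t (List.replicate k b ++ x'))
      ≤ ∑ d ∈ range (t + 1),
          #((deletions (t - d) x').image (List.replicate (k - d) b ++ ·)) :=
        (card_le_card (deletions_replicate_append_subset t k b x')).trans card_biUnion_le
    _ ≤ ∑ d ∈ range (t + 1), (runsCount x' + (t - d) - 1).choose (t - d) :=
        sum_le_sum fun d _ => card_image_le.trans (card_deletions_le x' (t - d))
    _ = (runsCount x' + t).choose t := by
        simpa using (sum_range_reflect (fun s => (runsCount x' + s - 1).choose s) (t + 1)).trans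
          (sum_range_add_sub_one_choose _ t)
    _ = (runsCount (List.replicate k b ++ x') + t - 1).choose t := by rw [hruns]; congr 1; omega
termination_by x.length
decreasing_by subst_vars; simp; omega

/-- The binary sequence with first symbol `b` whose `i`-th symbol differs from the next one
exactly when `ds[i] = true`. -/
def ofDiffs : Bool → List Bool → List Bool
  | b, [] => [b]
  | b, d :: ds => b :: ofDiffs (d ^^ b) ds

section OfDiffs

open List

@[simp] lemma length_ofDiffs (b : Bool) (ds : List Bool) :
    (ofDiffs b ds).length = ds.length + 1 := by
  induction ds generalizing b <;> simp [ofDiffs, *]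

lemma head?_ofDiffs (b : Bool) (ds : List Bool) : (ofDiffs b ds).head? = some b := by
  cases ds <;> rfl

lemma runsCount_ofDiffs (b : Bool) (ds : List Bool) :
    runsCount (ofDiffs b ds) = ds.count true + 1 := by
  induction ds generalizing b with
  | nil => rfl
  | cons d ds ih =>
    rw [ofDiffs, runsCount_cons, head?_ofDiffs, ih]
    cases d <;> simp

lemma ofDiffs_inj {b b' : Bool} {ds ds' : List Bool} (h : ofDiffs b ds = ofDiffs b' ds') :
    b = b' ∧ ds = ds' := by
  have hlen : ds.length = ds'.length := by simpa using congrArg length h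
  induction ds generalizing b b' ds' with
  | nil => cases ds' <;> simp_all [ofDiffs]
  | cons d ds ih =>
    cases ds' with
    | nil => simp at hlen
    | cons d' ds' =>
      simp only [ofDiffs, cons.injEq] at h
      obtain ⟨rfl, h⟩ := h
      obtain ⟨hd, rfl⟩ := ih h (by simpa using hlen)
      exact ⟨rfl, by rw [Bool.xor_left_inj.1 hd]⟩

end OfDiffs

lemma count_true_map_range_mem {L : ℕ} {S : Finset ℕ} (hS : S ⊆ range L) :
    ((List.range L).map fun i => decide (i ∈ S)).count true = #S := by
  have hS : S = (range L).filter (· ∈ S) := by ext; simpa using fun h => mem_range.1 (hS h)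
  conv_rhs => rw [hS, card_def, filter_val, range_val, ← Multiset.coe_range, Multiset.filter_coe,
    Multiset.coe_card]
  simp only [List.count_eq_countP, beq_true, List.countP_eq_length_filter, List.filter_map,
    List.length_map]
  rfl

lemma map_range_mem_injOn (L : ℕ) :
    Set.InjOn (fun S : Finset ℕ => (List.range L).map fun i => decide (i ∈ S))
      {S | S ⊆ range L} := by
  intro S hS S' hS' h
  have h : ∀ i < L, (i ∈ S ↔ i ∈ S') := by simpa using List.map_inj_left.1 h
  ext i
  exact ⟨fun hi => (h i (mem_range.1 (hS hi))).1 hi,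
    fun hi => (h i (mem_range.1 (hS' hi))).2 hi⟩

noncomputable def binarySeqs (m : ℕ) : Finset (List Bool) :=
  (List.finite_length_eq Bool m).toFinset

@[simp] lemma mem_binarySeqs {m : ℕ} {y : List Bool} : y ∈ binarySeqs m ↔ y.length = m := by
  simp [binarySeqs]

lemma two_mul_choose_le_card_runsCount_eq {m p : ℕ} (hm : 0 < m) (hp : 0 < p) :
    2 * (m - 1).choose (p - 1) ≤ #{y ∈ binarySeqs m | runsCount y = p} := by
  calc 2 * (m - 1).choose (p - 1)
        = #((univ : Finset Bool) ×ˢ (range (m - 1)).powersetCard (p - 1)) := by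
        rw [card_product, card_powersetCard, card_range, card_univ, Fintype.card_bool]
    _ ≤ _ := by
      refine card_le_card_of_injOn
        (fun q => ofDiffs q.1 ((List.range (m - 1)).map fun i => decide (i ∈ q.2))) ?_ ?_
      · rintro ⟨b, S⟩ hq
        simp only [coe_product, Set.mem_prod, mem_coe, mem_powersetCard] at hq
        simp only [mem_coe, mem_filter, mem_binarySeqs, length_ofDiffs, List.length_map,
          List.length_range, runsCount_ofDiffs, count_true_map_range_mem hq.2.1, hq.2.2]
        omega
      · rintro ⟨b, S⟩ hq ⟨b', S'⟩ hq' h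
        simp only [coe_product, Set.mem_prod, mem_coe, mem_powersetCard] at hq hq'
        obtain ⟨hb, h⟩ := ofDiffs_inj h
        exact Prod.ext hb (map_range_mem_injOn _ hq.2.1 hq'.2.1 h)

lemma sum_two_mul_choose_le_card_runsCount_mem {m a b : ℕ} (hm : 0 < m) (ha : 0 < a) :
    ∑ p ∈ Icc a b, 2 * (m - 1).choose (p - 1) ≤
      #{y ∈ binarySeqs m | runsCount y ∈ Icc a b} := by
  rw [← sum_card_fiberwise_eq_card_filter]
  exact sum_le_sum fun p hp => two_mul_choose_le_card_runsCount_eq hm (by simp at hp; omega)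

lemma card_runsCount_mem_le_of_covers {t n a b : ℕ} (htn : t ≤ n) {C : Finset (List Bool)}
    (hlen : ∀ x ∈ C, x.length = n)
    (hcover : ∀ y : List Bool, y.length = n - t → ∃ x ∈ C, y <+ x) :
    #{y ∈ binarySeqs (n - t) | runsCount y ∈ Icc a b} ≤
      #{x ∈ C | runsCount x ∈ Icc a (b + 2 * t)} * (b + 3 * t - 1).choose t := by
  set C' := C.filter fun x => runsCount x ∈ Icc a (b + 2 * t)
  have hsub :
      {y ∈ binarySeqs (n - t) | runsCount y ∈ Icc a b} ⊆ C'.biUnion (deletions t) := by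
    intro y hy
    simp only [mem_filter, mem_binarySeqs, mem_Icc] at hy
    obtain ⟨x, hx, hyx⟩ := hcover y hy.1
    have := runsCount_mono hyx
    have := runsCount_le_of_sublist hyx
    have := hlen x hx
    simp only [mem_biUnion, mem_filter, mem_Icc, mem_deletions, C']
    exact ⟨x, ⟨hx, by omega, by omega⟩, hyx, by omega⟩
  calc _ ≤ #(C'.biUnion (deletions t)) := card_le_card hsub
    _ ≤ ∑ x ∈ C', #(deletions t x) := card_biUnion_le
    _ ≤ ∑ _x ∈ C', (b + 3 * t - 1).choose t := sum_le_sum fun x hx => by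
        have := (mem_filter.1 hx).2
        simp only [mem_Icc] at this
        exact (card_deletions_le x t).trans (Nat.choose_le_choose t (by omega))
    _ = #C' * (b + 3 * t - 1).choose t := sum_const_nat fun _ _ => rfl

lemma IsDeletionCode.finite {t n : ℕ} {C : Set (List Bool)} (hC : IsDeletionCode t n C) :
    C.Finite :=
  (List.finite_length_eq Bool n).subset hC.1

lemma Set.Finite.sum_ncard_fiberwise_eq_card_filter {α κ : Type*} [DecidableEq κ] {s : Set α}
    (hs : s.Finite) (t : Finset κ) (g : α → κ) :
    ∑ j ∈ t, {x ∈ s | g x = j}.ncard = #{x ∈ hs.toFinset | g x ∈ t} := by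
  rw [← sum_card_fiberwise_eq_card_filter]
  refine sum_congr rfl fun j _ => ?_
  rw [Set.ncard_eq_toFinset_card _ (hs.subset fun x hx => hx.1)]
  congr 1
  ext
  simp

lemma IsPerfectDeletionCode.sum_two_mul_choose_le {t n : ℕ} {C : Set (List Bool)}
    (hC : IsPerfectDeletionCode t n C) (htn : t < n) {a : ℕ} (ha : 0 < a) (b : ℕ) :
    ∑ p ∈ Icc a b, 2 * (n - t - 1).choose (p - 1) ≤
      #{x ∈ hC.1.finite.toFinset | runsCount x ∈ Icc a (b + 2 * t)} *
        (b + 3 * t - 1).choose t := by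
  refine (sum_two_mul_choose_le_card_runsCount_mem (by omega) ha).trans
    (card_runsCount_mem_le_of_covers htn.le (by simpa using hC.1.1) fun y hy => ?_)
  obtain ⟨x, hx, hyx, -⟩ := Set.mem_iUnion₂.1 (hC.2.symm ▸ hy : y ∈ delSphereSet t C)
  exact ⟨x, by simpa using hx, hyx⟩

lemma ascFactorial_mul_ascFactorial_le {x y : ℕ} (hxy : x ≤ y) (d t : ℕ) :
    x.ascFactorial t * (y + d).ascFactorial t ≤ (x + d).ascFactorial t * y.ascFactorial t := by
  induction t with
  | zero => simp
  | succ t ih =>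
    simp only [Nat.ascFactorial_succ]
    have step : (x + t) * (y + d + t) ≤ (x + d + t) * (y + t) := by nlinarith
    calc (x + t) * x.ascFactorial t * ((y + d + t) * (y + d).ascFactorial t)
        = (x + t) * (y + d + t) * (x.ascFactorial t * (y + d).ascFactorial t) := by ring
      _ ≤ (x + d + t) * (y + t) * ((x + d).ascFactorial t * y.ascFactorial t) :=
        Nat.mul_le_mul step ih
      _ = _ := by ring

/-- `C(x + d + t, t) / C(x + t, t)` decreases in `x`. -/
lemma choose_mul_choose_le {x y : ℕ} (hxy : x ≤ y) (d t : ℕ) :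
    (x + t).choose t * (y + d + t).choose t ≤ (x + d + t).choose t * (y + t).choose t := by
  have h := ascFactorial_mul_ascFactorial_le (Nat.add_le_add_right hxy 1) d t
  rw [Nat.add_right_comm y 1 d, Nat.add_right_comm x 1 d] at h
  simp only [Nat.ascFactorial_eq_factorial_mul_choose] at h
  refine Nat.le_of_mul_le_mul_left ?_ (Nat.mul_pos t.factorial_pos t.factorial_pos)
  linarith

lemma choose_mul_choose_mul_choose_le {n t a b c p : ℕ} (hc : 0 < c) (hca : c ≤ a) (hab : a ≤ b)
    (hap : a ≤ p) :
    (c + t - 1).choose t * (b + 3 * t - 1).choose t * (n - 1).choose (p + t - 1) ≤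
      (c + b - a + 3 * t - 1).choose t * (n - 1).choose t * (n - t - 1).choose (p - 1) := by
  have hwindow : (c + t - 1).choose t * (b + 3 * t - 1).choose t ≤
      (c + b - a + 3 * t - 1).choose t * (p + t - 1).choose t :=
    calc _ ≤ (c + t - 1).choose t * (p - 1 + (b - a + 2 * t) + t).choose t := by
          gcongr; omega
      _ ≤ _ := by
          convert choose_mul_choose_le (x := c - 1) (y := p - 1) (by omega) (b - a + 2 * t) t
            using 3 <;> omega
  have hsplit : (n - 1).choose (p + t - 1) * (p + t - 1).choose t =
      (n - 1).choose t * (n - t - 1).choose (p - 1) := by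
    rw [Nat.choose_mul (by omega)]
    congr 2 <;> omega
  calc _ ≤ (c + b - a + 3 * t - 1).choose t * (p + t - 1).choose t *
          (n - 1).choose (p + t - 1) := Nat.mul_le_mul_right _ hwindow
    _ = _ := by rw [mul_assoc, mul_comm ((p + t - 1).choose t), hsplit, mul_assoc]

theorem perfect_code_runs_card_lower_bound_general (t n : ℕ) (htn : t < n)
    (C : Set (List Bool)) (hC : IsPerfectDeletionCode t n C)
    (a b c : ℕ) (hc : 0 < c) (hca : c ≤ a) (hab : a < b) :
    (((c + t - 1).choose t : ℝ) / ((c + b - a + 3 * t - 1).choose t : ℝ)) *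
        (2 / ((n - 1).choose t : ℝ)) *
        ∑ p ∈ Finset.Icc a b, ((n - 1).choose (p + t - 1) : ℝ) ≤
      ∑ r ∈ Finset.Icc a (b + 2 * t),
        (({x ∈ C | runsCount x = r} : Set (List Bool)).ncard : ℝ) := by
  set K := #{x ∈ hC.1.finite.toFinset | runsCount x ∈ Icc a (b + 2 * t)}
  rw [← Nat.cast_sum (s := Icc a (b + 2 * t)), hC.1.finite.sum_ncard_fiberwise_eq_card_filter]
  have hcount : 2 * ∑ p ∈ Icc a b, (n - t - 1).choose (p - 1) ≤
      K * (b + 3 * t - 1).choose t := by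
    rw [mul_sum]
    exact hC.sum_two_mul_choose_le htn (by omega) b
  have hterms : (c + t - 1).choose t * (b + 3 * t - 1).choose t *
        ∑ p ∈ Icc a b, (n - 1).choose (p + t - 1) ≤
      (c + b - a + 3 * t - 1).choose t * (n - 1).choose t *
        ∑ p ∈ Icc a b, (n - t - 1).choose (p - 1) := by
    simp only [mul_sum]
    exact sum_le_sum fun p hp => choose_mul_choose_mul_choose_le hc hca hab.le (mem_Icc.1 hp).1
  have hnat : (c + t - 1).choose t * 2 * ∑ p ∈ Icc a b, (n - 1).choose (p + t - 1) ≤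
      K * ((c + b - a + 3 * t - 1).choose t * (n - 1).choose t) := by
    have hC4 : 0 < (b + 3 * t - 1).choose t := Nat.choose_pos (by omega)
    refine Nat.le_of_mul_le_mul_right ?_ hC4
    nlinarith [Nat.mul_le_mul_left ((c + b - a + 3 * t - 1).choose t * (n - 1).choose t) hcount]
  have hpos : (0 : ℝ) < (c + b - a + 3 * t - 1).choose t * (n - 1).choose t := by
    exact_mod_cast Nat.mul_pos (Nat.choose_pos (by omega)) (Nat.choose_pos (by omega))
  rw [div_mul_div_comm, div_mul_eq_mul_div, div_le_iff₀ hpos]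
  exact_mod_cast hnat

/-- Lower bound on the number of codewords of a perfect `t`-deletion code
with runs in `[a, b+2t]`. -/
theorem perfect_code_runs_card_lower_bound (t n : ℕ) (ht : 0 < t) (htn : t < n)
    (C : Set (List Bool)) (hC : IsPerfectDeletionCode t n C)
    (a b c : ℕ) (hc : 0 < c) (hca : c ≤ a) (hab : a < b) (hb : b ≤ n) :
    (((c + t - 1).choose t : ℝ) / ((c + b - a + 3 * t - 1).choose t : ℝ)) *
        (2 / ((n - 1).choose t : ℝ)) *
        ∑ p ∈ Finset.Icc a b, ((n - 1).choose (p + t - 1) : ℝ) ≤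
      ∑ r ∈ Finset.Icc a (b + 2 * t),
        (({x ∈ C | runsCount x = r} : Set (List Bool)).ncard : ℝ) :=
  perfect_code_runs_card_lower_bound_general t n htn C hC a b c hc hca hab
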